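/- If T is (n,k)-quasi-*-paranormal, then ker(T^{1+k}) = ker(T^{2+k}), and for every nonzero λ ∈ ℂ, ker(T − λ) = ker((T − λ)²). -/

import Mathlib

/-!
If `y = S x` lies in `ker S†` then `‖y‖² = ⟪S† S x, x⟫ = 0`; hence `ker S^(2+k) = ker S^(1+k)` as
soon as `S†` vanishes on `ker S ∩ range S^k`. For `S = T` this follows from the `(n,k)` inequality
at such a vector, whose right-hand side vanishes. For `S = T - λ` (and `k = 0`) the inequality at
an eigenvector reads `‖T† x‖ ≤ |λ| ‖x‖`, which together with `⟪T† x, x⟫ = λ ‖x‖²` forces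
`T† x = conj λ • x`, i.e. `(T - λ)† x = 0`.
-/

open ContinuousLinearMap ComplexConjugate

section Adjoint

theorem ContinuousLinearMap.pow_apply_of_apply_eq_smul {R M : Type*} [Semiring R]
    [TopologicalSpace M] [AddCommMonoid M] [Module R M] {T : M →L[R] M} {c : R} {x : M}
    (hx : T x = c • x) (m : ℕ) : (T ^ m) x = c ^ m • x := by
  induction m with
  | zero => simp
  | succ m ih => rw [pow_succ', mul_apply_eq_comp, ih, map_smul, hx, smul_smul, pow_succ]

variable {𝕜 E : Type*} [RCLike 𝕜] [NormedAddCommGroup E] [InnerProductSpace 𝕜 E] [CompleteSpace E]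

theorem ContinuousLinearMap.apply_eq_zero_of_adjoint_apply_apply_eq_zero {T : E →L[𝕜] E} {x : E}
    (h : adjoint T (T x) = 0) : T x = 0 := by
  simpa using (SetLike.ext_iff.mp T.ker_adjoint_comp_self x).mp h

theorem ContinuousLinearMap.adjoint_apply_eq_conj_smul_of_norm_le {T : E →L[𝕜] E} {c : 𝕜} {x : E}
    (hx : T x = c • x) (hle : ‖adjoint T x‖ ≤ ‖c‖ * ‖x‖) : adjoint T x = conj c • x := by
  have hre : RCLike.re (inner 𝕜 (adjoint T x) (conj c • x)) = ‖c‖ ^ 2 * ‖x‖ ^ 2 := by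
    rw [inner_smul_right, adjoint_inner_left, hx, inner_smul_right, inner_self_eq_norm_sq_to_K,
      ← mul_assoc, RCLike.conj_mul]
    norm_cast
  have hsq : ‖adjoint T x - conj c • x‖ ^ 2 ≤ 0 := by
    rw [@norm_sub_sq 𝕜, hre, norm_smul, RCLike.norm_conj]
    nlinarith [norm_nonneg (adjoint T x), mul_nonneg (norm_nonneg c) (norm_nonneg x)]
  rw [← sub_eq_zero, ← norm_eq_zero]
  exact pow_eq_zero_iff two_ne_zero |>.mp (le_antisymm hsq (by positivity))

theorem ContinuousLinearMap.ker_pow_two_add_eq_ker_pow_one_add {T : E →L[𝕜] E} {k : ℕ}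
    (h : ∀ x, T ((T ^ k) x) = 0 → adjoint T ((T ^ k) x) = 0) :
    LinearMap.ker ((T ^ (2 + k) : E →L[𝕜] E) : E →ₗ[𝕜] E)
      = LinearMap.ker ((T ^ (1 + k) : E →L[𝕜] E) : E →ₗ[𝕜] E) := by
  have hsucc : ∀ m z, (T ^ (1 + m)) z = T ((T ^ m) z) := fun m z ↦ by
    rw [add_comm, pow_succ', mul_apply_eq_comp]
  have hcomm : ∀ z, (T ^ k) (T z) = T ((T ^ k) z) := fun z ↦ by
    rw [← mul_apply_eq_comp, ← pow_succ, pow_succ', mul_apply_eq_comp]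
  ext x
  simp only [LinearMap.mem_ker, coe_coe, show 2 + k = 1 + (1 + k) by omega, hsucc]
  refine ⟨fun hx ↦ apply_eq_zero_of_adjoint_apply_apply_eq_zero ?_, fun hx ↦ by rw [hx, map_zero]⟩
  simpa [hcomm] using h (T x) (by rwa [hcomm])

end Adjoint

section QuasiStarParanormal

variable {H : Type*} [NormedAddCommGroup H] [InnerProductSpace ℂ H] [CompleteSpace H]

def IsQuasiStarParanormal (n k : ℕ) (T : H →L[ℂ] H) : Prop :=
  ∀ x : H, ‖adjoint T (T ^ k <| x)‖ ^ (n + 1) ≤ ‖T ^ (n + 1) <| T ^ k <| x‖ * ‖T ^ k <| x‖ ^ n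

namespace IsQuasiStarParanormal

variable {n k : ℕ} {T : H →L[ℂ] H}

theorem adjoint_apply_eq_zero (hT : IsQuasiStarParanormal n k T) {x : H}
    (hx : T ((T ^ k) x) = 0) : adjoint T ((T ^ k) x) = 0 := by
  have h := hT x
  rw [pow_succ T, mul_apply_eq_comp, hx, map_zero, norm_zero, zero_mul] at h
  exact norm_eq_zero.mp <| pow_eq_zero_iff n.succ_ne_zero |>.mp (le_antisymm h (by positivity))

theorem adjoint_apply_eq_conj_smul (hT : IsQuasiStarParanormal n k T) {c : ℂ} (hc : c ≠ 0)
    {x : H} (hx : T x = c • x) : adjoint T x = conj c • x := by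
  refine adjoint_apply_eq_conj_smul_of_norm_le hx ?_
  have h := hT x
  simp only [pow_apply_of_apply_eq_smul hx, map_smul, smul_smul, norm_smul, norm_mul,
    norm_pow] at h
  have hpow : (‖c‖ ^ k * ‖adjoint T x‖) ^ (n + 1) ≤ (‖c‖ ^ k * (‖c‖ * ‖x‖)) ^ (n + 1) :=
    h.trans_eq (by ring)
  exact le_of_mul_le_mul_left (le_of_pow_le_pow_left₀ n.succ_ne_zero (by positivity) hpow)
    (by positivity)

theorem adjoint_sub_smul_one_apply_eq_zero (hT : IsQuasiStarParanormal n k T) {c : ℂ} (hc : c ≠ 0)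
    {x : H} (hx : (T - c • 1) x = 0) : adjoint (T - c • 1) x = 0 := by
  have hTx : T x = c • x := by simpa [sub_eq_zero] using hx
  simp [map_smulₛₗ, adjoint_one, hT.adjoint_apply_eq_conj_smul hc hTx]

end IsQuasiStarParanormal

end QuasiStarParanormal

/-- If `T` is `(n,k)`-quasi-*-paranormal, then `ker T^{1+k} = ker T^{2+k}`, and for every
nonzero `λ ∈ ℂ`, `ker (T - λ) = ker ((T - λ)^2)`. -/
theorem stmt_17 {H : Type*} [NormedAddCommGroup H] [InnerProductSpace ℂ H] [CompleteSpace H]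
    (T : H →L[ℂ] H) (n k : ℕ)
    (hT : ∀ x : H, ‖adjoint T (T ^ k <| x)‖ ^ (n + 1) ≤
      ‖T ^ (n + 1) <| T ^ k <| x‖ * ‖T ^ k <| x‖ ^ n) :
    LinearMap.ker ((T ^ (1 + k) : H →L[ℂ] H) : H →ₗ[ℂ] H) = LinearMap.ker ((T ^ (2 + k) : H →L[ℂ] H) : H →ₗ[ℂ] H)
      ∧ ∀ lam : ℂ, lam ≠ 0 →
        LinearMap.ker ((T - lam • (1 : H →L[ℂ] H) : H →L[ℂ] H) : H →ₗ[ℂ] H)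
          = LinearMap.ker (((T - lam • (1 : H →L[ℂ] H)) ^ 2 : H →L[ℂ] H) : H →ₗ[ℂ] H) := by
  have hT : IsQuasiStarParanormal n k T := hT
  refine ⟨(ker_pow_two_add_eq_ker_pow_one_add fun _ ↦ hT.adjoint_apply_eq_zero).symm,
    fun lam hlam ↦ ?_⟩
  set S : H →L[ℂ] H := T - lam • 1
  have hS : ∀ x, S ((S ^ 0) x) = 0 → adjoint S ((S ^ 0) x) = 0 := by
    simpa only [pow_zero, one_apply] using fun _ ↦ hT.adjoint_sub_smul_one_apply_eq_zero hlam
  simpa only [add_zero, pow_one] using (ker_pow_two_add_eq_ker_pow_one_add hS).symm
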